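/- arXiv:2404.15965 — 2 statements merged into one kernel-verified Lean document; each statement's English description precedes it below -/
import Mathlib

section
/- Let N ≥ 2 be an integer and let j0 ≥ 1 be an integer. For every α > 0 and every real r > 1, one has (Φ_{α,j0}(t))^r ≤ Φ_{αr,j0}(t) for all t > 0. -/
open Real Finset

/-- `Φ_{α,j0}(t) = exp(α|t|^{N/(N-1)}) - Σ_{j=0}^{j0-1} (α^j/j!) |t|^{jN/(N-1)}`. -/
noncomputable def PhiFun (N j0 : ℕ) (α t : ℝ) : ℝ :=
  Real.exp (α * |t| ^ ((N : ℝ) / ((N : ℝ) - 1))) -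
    ∑ j ∈ Finset.range j0, α ^ j / (Nat.factorial j : ℝ) *
      |t| ^ ((j : ℝ) * (N : ℝ) / ((N : ℝ) - 1))

/-- Tail of the exponential series. -/
noncomputable def Ffun (k : ℕ) (u : ℝ) : ℝ :=
  Real.exp u - ∑ j ∈ Finset.range k, u ^ j / (Nat.factorial j : ℝ)

lemma Ffun_nonneg (k : ℕ) {u : ℝ} (hu : 0 ≤ u) : 0 ≤ Ffun k u :=
  sub_nonneg.2 (Real.sum_le_exp_of_nonneg hu k)

lemma Ffun_succ_le (k : ℕ) {u : ℝ} (hu : 0 ≤ u) : Ffun (k + 1) u ≤ Ffun k u := by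
  unfold Ffun
  rw [Finset.sum_range_succ]
  have : 0 ≤ u ^ k / (Nat.factorial k : ℝ) :=
    div_nonneg (pow_nonneg hu k) (Nat.cast_nonneg _)
  linarith

lemma hasDerivAt_Ffun (k : ℕ) (u : ℝ) :
    HasDerivAt (Ffun (k + 1)) (Ffun k u) u := by
  have hsum : HasDerivAt (fun v : ℝ => ∑ j ∈ Finset.range (k + 1), v ^ j / (Nat.factorial j : ℝ))
      (∑ j ∈ Finset.range k, u ^ j / (Nat.factorial j : ℝ)) u := by
    have h : ∀ j ∈ Finset.range (k + 1), HasDerivAt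
        (fun v : ℝ => v ^ j / (Nat.factorial j : ℝ))
        ((j : ℝ) * u ^ (j - 1) / (Nat.factorial j : ℝ)) u := by
      intro j _
      simpa using (hasDerivAt_pow j u).div_const (Nat.factorial j : ℝ)
    have h2 := HasDerivAt.fun_sum h
    refine h2.congr_deriv (Eq.symm ?_)
    rw [Finset.sum_range_succ' (fun j => (j : ℝ) * u ^ (j - 1) / (Nat.factorial j : ℝ))]
    simp only [Nat.cast_zero, zero_mul, zero_div, add_zero]
    refine Finset.sum_congr rfl fun i _ => ?_
    have hfi : (Nat.factorial i : ℝ) ≠ 0 := Nat.cast_ne_zero.2 (Nat.factorial_ne_zero i)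
    rw [Nat.factorial_succ]
    push_cast
    field_simp
  exact (Real.hasDerivAt_exp u).sub hsum

lemma Ffun_zero_eq (k : ℕ) : Ffun (k + 1) 0 = 0 := by
  unfold Ffun
  rw [Finset.sum_range_succ']
  simp

/-- Key lemma: `Ffun k u ^ r ≤ Ffun k (r * u)` for `u ≥ 0`, `r ≥ 1`. -/
lemma Ffun_rpow_le (k : ℕ) {r : ℝ} (hr : 1 ≤ r) : ∀ u : ℝ, 0 ≤ u →
    Ffun k u ^ r ≤ Ffun k (r * u) := by
  induction k with
  | zero =>
    intro u hu
    simp only [Ffun, Finset.range_zero, Finset.sum_empty, sub_zero]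
    rw [← Real.exp_mul, mul_comm]
  | succ k ih =>
    intro u hu
    set h : ℝ → ℝ := fun v => Ffun (k + 1) (r * v) - Ffun (k + 1) v ^ r with hh
    have hderiv : ∀ v : ℝ, HasDerivAt h
        (Ffun k (r * v) * r - Ffun k v * r * Ffun (k + 1) v ^ (r - 1)) v := by
      intro v
      have h1 : HasDerivAt (fun w : ℝ => Ffun (k + 1) (r * w)) (Ffun k (r * v) * r) v := by
        have := (hasDerivAt_Ffun k (r * v)).comp v ((hasDerivAt_id v).const_mul r)
        simpa [Function.comp_def] using this
      have h2 : HasDerivAt (fun w : ℝ => Ffun (k + 1) w ^ r)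
          (Ffun k v * r * Ffun (k + 1) v ^ (r - 1)) v :=
        (hasDerivAt_Ffun k v).rpow_const (Or.inr hr)
      exact h1.sub h2
    have hdnn : ∀ v ∈ Set.Ici (0 : ℝ),
        0 ≤ Ffun k (r * v) * r - Ffun k v * r * Ffun (k + 1) v ^ (r - 1) := by
      intro v hv
      simp only [Set.mem_Ici] at hv
      have hFk : 0 ≤ Ffun k v := Ffun_nonneg k hv
      have key : Ffun k v * Ffun (k + 1) v ^ (r - 1) ≤ Ffun k (r * v) := by
        calc Ffun k v * Ffun (k + 1) v ^ (r - 1)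
            ≤ Ffun k v * Ffun k v ^ (r - 1) := by
              apply mul_le_mul_of_nonneg_left _ hFk
              exact Real.rpow_le_rpow (Ffun_nonneg (k + 1) hv) (Ffun_succ_le k hv)
                (by linarith)
          _ = Ffun k v ^ r := by
              rcases eq_or_lt_of_le hFk with h0 | h0
              · rw [← h0, zero_mul, Real.zero_rpow ((by linarith : (0:ℝ) < r).ne')]
              · have h2 := Real.rpow_add h0 1 (r - 1)
                rw [Real.rpow_one] at h2
                rw [← h2]
                congr 1
                ring
          _ ≤ Ffun k (r * v) := ih v hv
      nlinarith [Real.rpow_nonneg (Ffun_nonneg (k + 1) hv) (r - 1)]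
    have hmono : MonotoneOn h (Set.Ici (0 : ℝ)) := by
      apply monotoneOn_of_deriv_nonneg (convex_Ici 0)
      · exact (Differentiable.continuous fun v => (hderiv v).differentiableAt).continuousOn
      · intro v _
        exact (hderiv v).differentiableAt.differentiableWithinAt
      · intro v hv
        rw [interior_Ici] at hv
        rw [(hderiv v).deriv]
        exact hdnn v (Set.mem_Ici.2 (le_of_lt hv))
    have h0 : h 0 = 0 := by
      simp [hh, Ffun_zero_eq, Real.zero_rpow (by linarith : r ≠ 0)]
    have := hmono (Set.self_mem_Ici) (Set.mem_Ici.2 hu) hu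
    rw [h0] at this
    exact sub_nonneg.1 this

theorem stmt_0 (N j0 : ℕ) (hN : 2 ≤ N) (hj0 : 1 ≤ j0)
    (α r : ℝ) (hα : 0 < α) (hr : 1 < r) :
    ∀ t : ℝ, 0 < t → (PhiFun N j0 α t) ^ r ≤ PhiFun N j0 (α * r) t := by
  intro t ht
  set p : ℝ := (N : ℝ) / ((N : ℝ) - 1) with hp
  have habs : |t| = t := abs_of_pos ht
  set u : ℝ := t ^ p with hu
  have hupos : 0 < u := Real.rpow_pos_of_pos ht p
  have hPhi : ∀ β : ℝ, PhiFun N j0 β t = Ffun j0 (β * u) := by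
    intro β
    unfold PhiFun Ffun
    rw [habs]
    congr 1
    refine Finset.sum_congr rfl fun j _ => ?_
    have : t ^ ((j : ℝ) * (N : ℝ) / ((N : ℝ) - 1)) = u ^ j := by
      rw [hu, ← Real.rpow_natCast (t ^ p) j, ← Real.rpow_mul (le_of_lt ht)]
      rw [hp]
      ring
    rw [this, mul_pow]
    ring
  rw [hPhi, hPhi]
  have := Ffun_rpow_le j0 (le_of_lt hr) (α * u) (by positivity)
  calc Ffun j0 (α * u) ^ r ≤ Ffun j0 (r * (α * u)) := this
    _ = Ffun j0 (α * r * u) := by ring_nf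
end

section
/- Let f ∈ C¹(ℝ) satisfy f(t) > 0 for t > 0 and f(t) = 0 for t ≤ 0, and set F(t) := ∫₀ᵗ f(s) ds. Suppose there exists τ ∈ (0,1) such that F(t)·f′(t)/f(t)² ≥ τ for all t > 0. Then f is nondecreasing on (0,+∞) and F(t) ≤ (1−τ)·t·f(t) for every t ≥ 0. -/
open Real Set

theorem stmt_2 (f F : ℝ → ℝ) (hf : ContDiff ℝ 1 f)
    (hfpos : ∀ t : ℝ, 0 < t → 0 < f t)
    (hfzero : ∀ t : ℝ, t ≤ 0 → f t = 0)
    (hF : ∀ t : ℝ, F t = ∫ s in (0 : ℝ)..t, f s)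
    (τ : ℝ) (hτ : τ ∈ Set.Ioo (0 : ℝ) 1)
    (hineq : ∀ t : ℝ, 0 < t → τ ≤ F t * deriv f t / (f t) ^ 2) :
    MonotoneOn f (Set.Ioi (0 : ℝ)) ∧ ∀ t : ℝ, 0 ≤ t → F t ≤ (1 - τ) * t * f t := by
  obtain ⟨hτ0, hτ1⟩ := hτ
  have hfd : Differentiable ℝ f := hf.differentiable one_ne_zero
  have hfc : Continuous f := hfd.continuous
  have hFeq : F = fun t => ∫ s in (0 : ℝ)..t, f s := funext hF
  have hFd : ∀ x : ℝ, HasDerivAt F (f x) x := by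
    intro x
    have h1 : HasDerivAt (fun u => ∫ s in (0 : ℝ)..u, f s) (f x) x :=
      intervalIntegral.integral_hasDerivAt_right (hfc.intervalIntegrable 0 x)
        (hfc.stronglyMeasurableAtFilter _ _) hfc.continuousAt
    rw [hFeq]; exact h1
  have hFpos : ∀ t : ℝ, 0 < t → 0 < F t := by
    intro t ht
    rw [hF]
    exact intervalIntegral.intervalIntegral_pos_of_pos_on
      (hfc.intervalIntegrable 0 t) (fun x hx => hfpos x hx.1) ht
  have hderiv_pos : ∀ t : ℝ, 0 < t → 0 < deriv f t := by
    intro t ht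
    have h1 := hineq t ht
    have hft := hfpos t ht
    have hft2 : (0:ℝ) < f t ^ 2 := by positivity
    have h2 : τ * f t ^ 2 ≤ F t * deriv f t := (le_div_iff₀ hft2).mp h1
    nlinarith [hFpos t ht]
  have hmono : StrictMonoOn f (Set.Ioi (0 : ℝ)) := by
    apply strictMonoOn_of_deriv_pos (convex_Ioi 0) hfc.continuousOn
    intro x hx
    rw [interior_Ioi] at hx
    exact hderiv_pos x hx
  refine ⟨hmono.monotoneOn, ?_⟩
  have hFle : ∀ t : ℝ, 0 < t → F t ≤ t * f t := by
    intro t ht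
    rw [hF]
    calc (∫ s in (0:ℝ)..t, f s) ≤ ∫ _ in (0:ℝ)..t, f t := by
          apply intervalIntegral.integral_mono_on ht.le (hfc.intervalIntegrable 0 t)
            intervalIntegrable_const
          intro s hs
          rcases eq_or_lt_of_le hs.1 with h | h
          · rw [hfzero s (le_of_eq h.symm)]; exact (hfpos t ht).le
          · rcases eq_or_lt_of_le hs.2 with h2 | h2
            · rw [h2]
            · exact (hmono (Set.mem_Ioi.mpr h) (Set.mem_Ioi.mpr (h.trans h2)) h2).le
      _ = t * f t := by simp
  -- derivative of h := (1-τ)s - F s / f s is nonneg on Ioi 0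
  have hmonoh : MonotoneOn (fun s => (1 - τ) * s - F s / f s) (Set.Ioi (0:ℝ)) := by
    have hder : ∀ s ∈ Set.Ioi (0:ℝ), HasDerivAt (fun s => (1 - τ) * s - F s / f s)
        ((1 - τ) - (f s * f s - F s * deriv f s) / f s ^ 2) s := by
      intro s hs
      have hfs : f s ≠ 0 := (hfpos s hs).ne'
      have hq : HasDerivAt (fun s => F s / f s)
          ((f s * f s - F s * deriv f s) / f s ^ 2) s :=
        (hFd s).div ((hfd s).hasDerivAt) hfs
      simpa [Pi.sub_def] using ((hasDerivAt_id s).const_mul (1 - τ)).sub hq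
    apply monotoneOn_of_deriv_nonneg (convex_Ioi 0)
    · apply ContinuousOn.sub ((continuous_const.mul continuous_id).continuousOn)
      intro s hs
      exact ((hFd s).continuousAt.continuousWithinAt).div (hfc.continuousAt.continuousWithinAt)
        (hfpos s hs).ne'
    · intro s hs
      rw [interior_Ioi] at hs
      exact ((hder s hs).differentiableAt).differentiableWithinAt
    · intro s hs
      rw [interior_Ioi] at hs
      rw [(hder s hs).deriv]
      have hfs : f s ≠ 0 := (hfpos s hs).ne'
      have h1 := hineq s hs
      have : (1 - τ) - (f s * f s - F s * deriv f s) / f s ^ 2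
          = F s * deriv f s / f s ^ 2 - τ := by
        field_simp; ring
      rw [this]
      linarith
  intro t ht
  rcases eq_or_lt_of_le ht with h0 | ht
  · rw [← h0, hF]
    simp
  · have hft := hfpos t ht
    refine le_of_forall_pos_le_add ?_
    intro δ hδ
    set ε := min (t/2) (δ / (τ * f t)) with hε
    have hε0 : 0 < ε := lt_min (by linarith) (by positivity)
    have hεt : ε < t := lt_of_le_of_lt (min_le_left _ _) (by linarith)
    have hh := hmonoh (Set.mem_Ioi.mpr hε0) (Set.mem_Ioi.mpr ht) hεt.le
    have hFε : F ε / f ε ≤ ε := by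
      rw [div_le_iff₀ (hfpos ε hε0)]
      exact hFle ε hε0
    -- from hh : (1-τ)ε - F ε / f ε ≤ (1-τ)t - F t / f t
    have h2 : F t / f t ≤ (1 - τ) * t + τ * ε := by
      simp only at hh
      nlinarith
    have h3 : F t ≤ ((1 - τ) * t + τ * ε) * f t := by
      rw [div_le_iff₀ hft] at h2
      exact h2
    have h4 : τ * ε * f t ≤ δ := by
      have : ε ≤ δ / (τ * f t) := min_le_right _ _
      rw [le_div_iff₀ (by positivity)] at this
      nlinarith
    nlinarith
end
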